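/- Let A be an n×n real symmetric positive semidefinite matrix with positive semidefinite square root √A. Then for every n×n real symmetric matrix X, the matrix √A X √A is majorized by (AX + XA)/2. -/

import Mathlib

open Matrix

/-- `v` is majorized by `w`: for every `k`, the sum of the `k` largest entries of `v`
is at most the sum of the `k` largest entries of `w`, with equality for `k = n`.
Stated equivalently: every subset sum of `v` is dominated by some subset sum of `w`
of the same cardinality, and the total sums agree. -/
def VecMajorizedBy {ι : Type*} [Fintype ι] (v w : ι → ℝ) : Prop :=
  (∀ s : Finset ι, ∃ t : Finset ι, t.card = s.card ∧ ∑ i ∈ s, v i ≤ ∑ i ∈ t, w i) ∧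
    ∑ i, v i = ∑ i, w i

/-- `X` is majorized by `Y`: both are (real) symmetric and the eigenvalue vector of `X`
is majorized by the eigenvalue vector of `Y`. -/
def MatMajorizedBy {ι : Type*} [Fintype ι] [DecidableEq ι]
    (X Y : Matrix ι ι ℝ) : Prop :=
  ∃ (hX : X.IsHermitian) (hY : Y.IsHermitian),
    VecMajorizedBy hX.eigenvalues hY.eigenvalues

/-- The positive semidefinite square root, as defined in Mathlib of December 2024
(since removed from Mathlib). -/
noncomputable def Matrix.PosSemidef.sqrt {n : Type*} [Fintype n] [DecidableEq n]
    {A : Matrix n n ℝ} (hA : A.PosSemidef) : Matrix n n ℝ :=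
  hA.1.eigenvectorUnitary.1 * diagonal ((√·) ∘ hA.1.eigenvalues) *
  (star hA.1.eigenvectorUnitary : Matrix n n ℝ)


/-!
Diagonalise `A = U diag(b²) Uᵀ`, so that `√A = U diag(b) Uᵀ`, and write `X' = Uᵀ X U`. Entrywise,
`b i * X' i j * b j = C i j * (b i ^ 2 * X' i j + X' i j * b j ^ 2) / 2` with
`C i j = 2 b i b j / (b i ^ 2 + b j ^ 2)`, so `√A X √A = Φ ((AX + XA) / 2)` where `Φ` is Schur
multiplication by `C` in the eigenbasis of `A`. The matrix `C` is the Gram matrix of the functions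
`t ↦ √2 b i exp (-b i ^ 2 t)` in `L²(0, ∞)`, hence positive semidefinite, and it has unit diagonal.
So `Φ` is positive, unital and self-dual for the trace pairing, and any such map satisfies
`Φ Y ≺ Y`: a sum of `k` eigenvalues of `Φ Y` is `tr (P Φ(Y)) = tr (Φ(P) Y)` for a spectral
projection `P` of rank `k`, and since `0 ≤ Φ P ≤ 1` with `tr (Φ P) = k`, the latter is at most a
sum of `k` eigenvalues of `Y` (Ky Fan).
-/

open MeasureTheory Set Real Unitary

section TopSums

variable {ι : Type*} [Fintype ι]

theorem exists_card_eq_forall_notMem_le (l : ι → ℝ) {k : ℕ} (hk : k ≤ Fintype.card ι) :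
    ∃ t : Finset ι, t.card = k ∧ ∀ i ∈ t, ∀ j ∉ t, l j ≤ l i := by
  classical
  induction k with
  | zero => exact ⟨∅, by simp⟩
  | succ k ih =>
    obtain ⟨t, rfl, htop⟩ := ih (by omega)
    have hne : tᶜ.Nonempty := by
      rw [← Finset.card_pos, Finset.card_compl]
      omega
    obtain ⟨j₀, hj₀, hmax⟩ := Finset.exists_max_image tᶜ l hne
    rw [Finset.mem_compl] at hj₀
    refine ⟨insert j₀ t, Finset.card_insert_of_notMem hj₀, fun i hi j hj => ?_⟩
    rw [Finset.mem_insert, not_or] at hj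
    rcases Finset.mem_insert.mp hi with rfl | hi
    · exact hmax j (Finset.mem_compl.mpr hj.2)
    · exact htop i hi j hj.2

theorem exists_card_eq_sum_mul_le_sum (l d : ι → ℝ) (hd₀ : ∀ i, 0 ≤ d i) (hd₁ : ∀ i, d i ≤ 1)
    {k : ℕ} (hd : ∑ i, d i = k) :
    ∃ t : Finset ι, t.card = k ∧ ∑ i, d i * l i ≤ ∑ i ∈ t, l i := by
  classical
  have hk : (k : ℝ) ≤ Fintype.card ι := by
    rw [← hd]
    simpa using Finset.sum_le_sum fun i (_ : i ∈ Finset.univ) => hd₁ i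
  obtain ⟨t, rfl, htop⟩ := exists_card_eq_forall_notMem_le l (k := k) (by exact_mod_cast hk)
  refine ⟨t, rfl, ?_⟩
  rcases t.eq_empty_or_nonempty with rfl | ht
  · have hd_zero : ∀ i, d i = 0 := fun i =>
      (Finset.sum_eq_zero_iff_of_nonneg fun i _ => hd₀ i).mp (by simpa using hd) i
        (Finset.mem_univ i)
    simp [hd_zero]
  -- As `∑ d = ∑ 𝟙_t`, the difference of the two sides is `∑ (d i - 𝟙_t i) * (l i - l i₀)`,
  -- whose terms are nonpositive because `l i₀ = min_t l` separates `t` from its complement.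
  obtain ⟨i₀, hi₀, hmin⟩ := Finset.exists_min_image t l ht
  set χ : ι → ℝ := fun i => if i ∈ t then 1 else 0
  have hχ : ∑ i ∈ t, l i = ∑ i, χ i * l i := by simp [χ, Finset.sum_ite_mem]
  have hχ_sum : ∑ i, χ i = t.card := by simp [χ]
  have hterm : ∀ i, (d i - χ i) * (l i - l i₀) ≤ 0 := by
    intro i
    by_cases hi : i ∈ t
    · simpa [χ, hi] using
        mul_nonpos_of_nonpos_of_nonneg (by linarith [hd₁ i]) (sub_nonneg.mpr (hmin i hi))
    · simpa [χ, hi] using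
        mul_nonpos_of_nonneg_of_nonpos (hd₀ i) (sub_nonpos.mpr (htop i₀ hi₀ i hi))
  have hsplit : ∑ i, d i * l i - ∑ i, χ i * l i
      = ∑ i, (d i - χ i) * (l i - l i₀) + l i₀ * (∑ i, d i - ∑ i, χ i) := by
    simp only [mul_sub, sub_mul, Finset.sum_sub_distrib, ← Finset.sum_mul]
    ring
  rw [hd, hχ_sum, sub_self, mul_zero] at hsplit
  rw [hχ]
  linarith [Finset.sum_nonpos fun i (_ : i ∈ Finset.univ) => hterm i]

end TopSums

theorem integrableOn_and_integral_Ioi_mul_exp_mul_exp (b c : ℝ) :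
    IntegrableOn (fun t => b * exp (-b ^ 2 * t) * (c * exp (-c ^ 2 * t))) (Ioi 0) ∧
      ∫ t in Ioi 0, b * exp (-b ^ 2 * t) * (c * exp (-c ^ 2 * t)) = b * c / (b ^ 2 + c ^ 2) := by
  have hexp : (fun t => b * exp (-b ^ 2 * t) * (c * exp (-c ^ 2 * t)))
      = fun t => b * c * exp (-(b ^ 2 + c ^ 2) * t) := by
    ext t
    rw [neg_add, add_mul, exp_add]
    ring
  rw [hexp]
  rcases (add_nonneg (sq_nonneg b) (sq_nonneg c)).eq_or_lt with hbc | hbc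
  · have hb : b = 0 := by nlinarith [sq_nonneg b, sq_nonneg c]
    simp [hb]
  refine ⟨(integrableOn_exp_mul_Ioi (neg_neg_iff_pos.mpr hbc) 0).const_mul _, ?_⟩
  rw [integral_const_mul, integral_exp_mul_Ioi (neg_neg_iff_pos.mpr hbc)]
  field_simp
  simp

namespace Matrix

section Conjugation

variable {ι : Type*} [Fintype ι]

theorem IsHermitian.mul_add_mul {A X : Matrix ι ι ℝ} (hA : A.IsHermitian) (hX : X.IsHermitian) :
    (A * X + X * A).IsHermitian := by
  have hXA : X * A = (A * X)ᴴ := by rw [conjTranspose_mul, hA.eq, hX.eq]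
  exact hXA ▸ isHermitian_add_transpose_self (A * X)

variable [DecidableEq ι]

theorem trace_conjStarAlgAut {α : Type*} [CommRing α] [StarRing α] (u : unitaryGroup ι α)
    (M : Matrix ι ι α) : (conjStarAlgAut α _ u M).trace = M.trace := by
  rw [conjStarAlgAut_apply, trace_mul_cycle, coe_star_mul_self, one_mul]

theorem PosSemidef.conjStarAlgAut {M : Matrix ι ι ℝ} (hM : M.PosSemidef) (u : unitaryGroup ι ℝ) :
    (Unitary.conjStarAlgAut ℝ _ u M).PosSemidef := by
  simpa [star_eq_conjTranspose] using hM.mul_mul_conjTranspose_same (u : Matrix ι ι ℝ)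

theorem IsHermitian.trace_mul_eq_sum_mul_eigenvalues {Y : Matrix ι ι ℝ} (hY : Y.IsHermitian)
    (Q : Matrix ι ι ℝ) :
    (Q * Y).trace =
      ∑ i, conjStarAlgAut ℝ _ (star hY.eigenvectorUnitary) Q i i * hY.eigenvalues i := by
  rw [← trace_conjStarAlgAut (star hY.eigenvectorUnitary), map_mul,
    conjStarAlgAut_star_eigenvectorUnitary]
  simp [trace, mul_diagonal]

end Conjugation

section KyFan

variable {ι : Type*} [Fintype ι] [DecidableEq ι]

theorem IsHermitian.exists_trace_mul_eq_sum_eigenvalues {Z : Matrix ι ι ℝ} (hZ : Z.IsHermitian)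
    (s : Finset ι) :
    ∃ P : Matrix ι ι ℝ, P.PosSemidef ∧ (1 - P).PosSemidef ∧ P.trace = s.card ∧
      (P * Z).trace = ∑ i ∈ s, hZ.eigenvalues i := by
  set c := conjStarAlgAut ℝ (Matrix ι ι ℝ) hZ.eigenvectorUnitary
  set χ : ι → ℝ := fun i => if i ∈ s then 1 else 0
  have hχ : ∀ i, 0 ≤ χ i ∧ 0 ≤ 1 - χ i := fun i => by by_cases hi : i ∈ s <;> simp [χ, hi]
  refine ⟨c (diagonal χ), (PosSemidef.diagonal fun i => (hχ i).1).conjStarAlgAut _, ?_, ?_, ?_⟩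
  · rw [← map_one c, ← map_sub, ← diagonal_one, diagonal_sub]
    exact (PosSemidef.diagonal fun i => (hχ i).2).conjStarAlgAut _
  · rw [trace_conjStarAlgAut, trace_diagonal]
    simp [χ]
  · rw [hZ.trace_mul_eq_sum_mul_eigenvalues, ← conjStarAlgAut_symm, StarAlgEquiv.symm_apply_apply]
    simp [χ]

theorem IsHermitian.exists_card_eq_trace_mul_le_sum_eigenvalues {Y Q : Matrix ι ι ℝ}
    (hY : Y.IsHermitian) (hQ : Q.PosSemidef) (hQ₁ : (1 - Q).PosSemidef) {k : ℕ}
    (hk : Q.trace = k) :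
    ∃ t : Finset ι, t.card = k ∧ (Q * Y).trace ≤ ∑ i ∈ t, hY.eigenvalues i := by
  set c := conjStarAlgAut ℝ (Matrix ι ι ℝ) (star hY.eigenvectorUnitary)
  have hdiag₁ : ∀ i, c Q i i ≤ 1 := fun i => by
    have := (hQ₁.conjStarAlgAut (star hY.eigenvectorUnitary)).diag_nonneg (i := i)
    rwa [map_sub, map_one, sub_apply, one_apply_eq, sub_nonneg] at this
  have htrace : ∑ i, c Q i i = k := by rw [← hk, ← trace_conjStarAlgAut _ Q]; rfl
  rw [hY.trace_mul_eq_sum_mul_eigenvalues]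
  exact exists_card_eq_sum_mul_le_sum _ _ (fun i => (hQ.conjStarAlgAut _).diag_nonneg) hdiag₁
    htrace

theorem matMajorizedBy_map_of_positive_unital_selfDual (Φ : Matrix ι ι ℝ →ₗ[ℝ] Matrix ι ι ℝ)
    (hpos : ∀ P, P.PosSemidef → (Φ P).PosSemidef) (hone : Φ 1 = 1)
    (hdual : ∀ M N, (Φ M * N).trace = (M * Φ N).trace) {Y : Matrix ι ι ℝ}
    (hY : Y.IsHermitian) (hΦY : (Φ Y).IsHermitian) : MatMajorizedBy (Φ Y) Y := by
  have htrace : ∀ M, (Φ M).trace = M.trace := fun M => by simpa [hone] using hdual M 1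
  refine ⟨hΦY, hY, fun s => ?_, ?_⟩
  · obtain ⟨P, hP, hP₁, hPtr, hPΦY⟩ := hΦY.exists_trace_mul_eq_sum_eigenvalues s
    have hΦP₁ : (1 - Φ P).PosSemidef := by simpa [hone] using hpos _ hP₁
    obtain ⟨t, ht, hle⟩ :=
      hY.exists_card_eq_trace_mul_le_sum_eigenvalues (hpos P hP) hΦP₁ ((htrace P).trans hPtr)
    exact ⟨t, ht, by rwa [← hPΦY, ← hdual]⟩
  · simpa [hΦY.trace_eq_sum_eigenvalues, hY.trace_eq_sum_eigenvalues] using htrace Y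

end KyFan

section SchurMultiplier

variable {ι : Type*} [Fintype ι]

theorem trace_hadamard_mul_of_isSymm {α : Type*} [CommSemiring α] {C : Matrix ι ι α}
    (hC : C.IsSymm) (M N : Matrix ι ι α) : ((C ⊙ M) * N).trace = (M * (C ⊙ N)).trace := by
  simp only [trace, diag, mul_apply, hadamard_apply]
  refine Finset.sum_congr rfl fun i _ => Finset.sum_congr rfl fun j _ => ?_
  rw [hC.apply i j]
  ring

variable [DecidableEq ι]

def schurMulIn (U : unitaryGroup ι ℝ) (C : Matrix ι ι ℝ) : Matrix ι ι ℝ →ₗ[ℝ] Matrix ι ι ℝ where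
  toFun M := conjStarAlgAut ℝ _ U (C ⊙ (conjStarAlgAut ℝ _ U).symm M)
  map_add' M N := by simp only [map_add, hadamard_add]
  map_smul' a M := by simp only [map_smul, hadamard_smul, RingHom.id_apply]

variable {U : unitaryGroup ι ℝ} {C : Matrix ι ι ℝ}

theorem schurMulIn_apply (M : Matrix ι ι ℝ) :
    schurMulIn U C M = conjStarAlgAut ℝ _ U (C ⊙ (conjStarAlgAut ℝ _ U).symm M) := rfl

theorem PosSemidef.schurMulIn {P : Matrix ι ι ℝ} (hC : C.PosSemidef) (hP : P.PosSemidef) :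
    (schurMulIn U C P).PosSemidef := by
  rw [schurMulIn_apply, conjStarAlgAut_symm]
  exact (hC.hadamard (hP.conjStarAlgAut _)).conjStarAlgAut U

theorem IsHermitian.schurMulIn {M : Matrix ι ι ℝ} (hC : C.IsHermitian) (hM : M.IsHermitian) :
    (schurMulIn U C M).IsHermitian := by
  have hM' : ((conjStarAlgAut ℝ _ U).symm M).IsHermitian :=
    IsSelfAdjoint.map (hM : IsSelfAdjoint M) (conjStarAlgAut ℝ _ U).symm
  exact IsSelfAdjoint.map (hC.hadamard hM' : IsSelfAdjoint _) (conjStarAlgAut ℝ _ U)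

theorem schurMulIn_one (hC : C.diag = 1) : schurMulIn U C 1 = 1 := by
  rw [schurMulIn_apply, map_one, hadamard_one_eq_one_iff.mpr hC, map_one]

theorem trace_schurMulIn_mul (hC : C.IsSymm) (M N : Matrix ι ι ℝ) :
    (schurMulIn U C M * N).trace = (M * schurMulIn U C N).trace := by
  set c := conjStarAlgAut ℝ (Matrix ι ι ℝ) U
  have htrace : ∀ M, (c M).trace = M.trace := trace_conjStarAlgAut U
  calc (schurMulIn U C M * N).trace = (c ((C ⊙ c.symm M) * c.symm N)).trace := by
        rw [map_mul, StarAlgEquiv.apply_symm_apply, schurMulIn_apply]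
    _ = (c (c.symm M * (C ⊙ c.symm N))).trace := by
        rw [htrace, htrace, trace_hadamard_mul_of_isSymm hC]
    _ = (M * schurMulIn U C N).trace := by
        rw [map_mul, StarAlgEquiv.apply_symm_apply, schurMulIn_apply]

end SchurMultiplier

section LyapunovKernel

variable {ι : Type*}

theorem posSemidef_integral_mul [Finite ι] {α : Type*} [MeasurableSpace α] {μ : Measure α}
    {f : ι → α → ℝ} (hf : ∀ i, MemLp (f i) 2 μ) :
    (of fun i j => ∫ a, f i a * f j a ∂μ).PosSemidef := by
  have hgram : of (fun i j => ∫ a, f i a * f j a ∂μ) = gram ℝ fun i => (hf i).toLp := by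
    ext i j
    rw [gram_apply, L2.inner_def, of_apply]
    refine integral_congr_ae ?_
    filter_upwards [(hf i).coeFn_toLp, (hf j).coeFn_toLp] with a hi hj
    simp [hi, hj, mul_comm]
  rw [hgram]
  exact posSemidef_gram ℝ _

theorem posSemidef_two_mul_div_sq_add_sq [Finite ι] (b : ι → ℝ) :
    (of fun i j => 2 * b i * b j / (b i ^ 2 + b j ^ 2)).PosSemidef := by
  have hL2 : ∀ i, MemLp (fun t => b i * exp (-b i ^ 2 * t)) 2 (volume.restrict (Ioi 0)) :=
    fun i => (memLp_two_iff_integrable_sq (by fun_prop)).mpr <| by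
      simpa only [pow_two, IntegrableOn] using
        (integrableOn_and_integral_Ioi_mul_exp_mul_exp (b i) (b i)).1
  have hentry : ∀ i j, 2 * b i * b j / (b i ^ 2 + b j ^ 2)
      = 2 * ∫ t in Ioi 0, b i * exp (-b i ^ 2 * t) * (b j * exp (-b j ^ 2 * t)) := fun i j => by
    rw [(integrableOn_and_integral_Ioi_mul_exp_mul_exp (b i) (b j)).2]
    ring
  simp_rw [hentry]
  exact (posSemidef_integral_mul hL2).smul (zero_le_two (α := ℝ))

-- The rank-one term turns the entries with `b i = b j = 0`, which are `0 / 0 = 0` in the first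
-- term, into `1`; this keeps the diagonal equal to `1`.
noncomputable def lyapunovKernel (b : ι → ℝ) : Matrix ι ι ℝ :=
  let e : ι → ℝ := fun i => if b i = 0 then 1 else 0
  of (fun i j => 2 * b i * b j / (b i ^ 2 + b j ^ 2)) + vecMulVec e e

theorem posSemidef_lyapunovKernel [Finite ι] (b : ι → ℝ) : (lyapunovKernel b).PosSemidef :=
  (posSemidef_two_mul_div_sq_add_sq b).add (posSemidef_vecMulVec_self_star _)

theorem diag_lyapunovKernel (b : ι → ℝ) : (lyapunovKernel b).diag = 1 := by
  ext i
  by_cases hb : b i = 0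
  · simp [lyapunovKernel, vecMulVec_apply, hb]
  · have hb' : b i ^ 2 + b i ^ 2 ≠ 0 := by positivity
    simp only [lyapunovKernel, diag_apply, add_apply, of_apply, vecMulVec_apply, hb, if_false,
      mul_zero, add_zero, Pi.one_apply]
    field_simp
    ring

theorem diagonal_mul_mul_diagonal_eq_lyapunovKernel_hadamard [Fintype ι] [DecidableEq ι]
    (b : ι → ℝ) (M : Matrix ι ι ℝ) :
    diagonal b * M * diagonal b = lyapunovKernel b ⊙
      ((2 : ℝ)⁻¹ • (diagonal b * diagonal b * M + M * (diagonal b * diagonal b))) := by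
  ext i j
  simp only [hadamard_apply, smul_apply, add_apply, diagonal_mul_diagonal, diagonal_mul,
    mul_diagonal, lyapunovKernel, of_apply, vecMulVec_apply, smul_eq_mul]
  rcases (add_nonneg (sq_nonneg (b i)) (sq_nonneg (b j))).eq_or_lt with hb | hb
  · have hi : b i = 0 := by nlinarith [sq_nonneg (b i), sq_nonneg (b j)]
    have hj : b j = 0 := by nlinarith [sq_nonneg (b i), sq_nonneg (b j)]
    simp [hi, hj]
  · have he : (if b i = 0 then (1 : ℝ) else 0) * (if b j = 0 then 1 else 0) = 0 := by
      by_cases hi : b i = 0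
      · have hj : b j ≠ 0 := by rintro hj; simp [hi, hj] at hb
        simp [hj]
      · simp [hi]
    rw [he, add_zero]
    field_simp

end LyapunovKernel

end Matrix

/-- For a real symmetric positive semidefinite `A` with positive semidefinite square root
`√A`, the matrix `√A * X * √A` is majorized by `(AX + XA)/2` for every symmetric `X`. -/
theorem sqrt_quadratic_majorized_lyapunov {n : ℕ}
    (A X : Matrix (Fin n) (Fin n) ℝ) (hA : A.PosSemidef) (hX : X.IsHermitian) :
    MatMajorizedBy (hA.sqrt * X * hA.sqrt) ((2 : ℝ)⁻¹ • (A * X + X * A)) := by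
  set U := hA.1.eigenvectorUnitary
  set c := conjStarAlgAut ℝ (Matrix (Fin n) (Fin n) ℝ) U
  set b : Fin n → ℝ := (√·) ∘ hA.1.eigenvalues
  have hsqrt : hA.sqrt = c (diagonal b) := rfl
  have hA_eq : A = c (diagonal b * diagonal b) := by
    conv_lhs => rw [hA.1.spectral_theorem]
    rw [diagonal_mul_diagonal]
    congr 2
    ext i
    simp [b, Real.mul_self_sqrt (hA.eigenvalues_nonneg i)]
  set Y := (2 : ℝ)⁻¹ • (A * X + X * A)
  have hY : Y = c ((2 : ℝ)⁻¹ • (diagonal b * diagonal b * c.symm X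
      + c.symm X * (diagonal b * diagonal b))) := by
    simp only [Y, hA_eq, map_smul, map_add, map_mul, StarAlgEquiv.apply_symm_apply]
  have hΦY : schurMulIn U (lyapunovKernel b) Y = hA.sqrt * X * hA.sqrt := by
    rw [schurMulIn_apply, hY, StarAlgEquiv.symm_apply_apply,
      ← diagonal_mul_mul_diagonal_eq_lyapunovKernel_hadamard, map_mul, map_mul,
      StarAlgEquiv.apply_symm_apply, hsqrt]
  have hC := posSemidef_lyapunovKernel b
  have hY_herm : Y.IsHermitian := (hA.1.mul_add_mul hX).smul (IsSelfAdjoint.all _)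
  rw [← hΦY]
  exact matMajorizedBy_map_of_positive_unital_selfDual _ (fun P hP => hC.schurMulIn hP)
    (schurMulIn_one (diag_lyapunovKernel b)) (trace_schurMulIn_mul (isHermitian_iff_isSymm.mp hC.1))
    hY_herm (hC.1.schurMulIn hY_herm)
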